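/- arXiv:2605.05016 — 3 statements merged into one kernel-verified Lean document; each statement's English description precedes it below -/
import Mathlib

section
/- In 3-valued Gödel logic with truth values {0, 1/2, 1}, the delta operator Δ (with Δx = 1 if x = 1 and Δx = 0 otherwise) is not expressible as a composition of the Gödel connectives min, max, Gödel implication, and the constants 0 and 1 applied to a single variable; equivalently, no function built from these operations agrees with Δ on {0, 1/2, 1}. -/
noncomputable def gimp (x y : ℝ) : ℝ := if x ≤ y then 1 else y
noncomputable def gdelta (x : ℝ) : ℝ := if x = 1 then 1 else 0

/-- The clone of unary functions generated by the identity, the constants 0 and 1,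
and pointwise min, max and Gödel implication. -/
inductive GClone1 : (ℝ → ℝ) → Prop
  | id : GClone1 (fun x => x)
  | zero : GClone1 (fun _ => 0)
  | one : GClone1 (fun _ => 1)
  | min : ∀ f g, GClone1 f → GClone1 g → GClone1 (fun x => min (f x) (g x))
  | max : ∀ f g, GClone1 f → GClone1 g → GClone1 (fun x => max (f x) (g x))
  | imp : ∀ f g, GClone1 f → GClone1 g → GClone1 (fun x => gimp (f x) (g x))

/-- The graph of the endomorphism 0↦0, 1/2↦1, 1↦1 restricted to pairs (f(1/2), f(1)). -/
def GRel (a b : ℝ) : Prop :=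
  (a = 0 ∧ b = 0) ∨ (a = 1/2 ∧ b = 1) ∨ (a = 1 ∧ b = 1)

lemma gclone_rel : ∀ f : ℝ → ℝ, GClone1 f → GRel (f (1/2)) (f 1) := by
  intro f h
  induction h with
  | id => right; left; norm_num
  | zero => left; norm_num
  | one => right; right; norm_num
  | min f g _ _ ihf ihg =>
      rcases ihf with ⟨h1, h2⟩ | ⟨h1, h2⟩ | ⟨h1, h2⟩ <;>
      rcases ihg with ⟨h3, h4⟩ | ⟨h3, h4⟩ | ⟨h3, h4⟩ <;>
      simp only [GRel, h1, h2, h3, h4] <;> norm_num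
  | max f g _ _ ihf ihg =>
      rcases ihf with ⟨h1, h2⟩ | ⟨h1, h2⟩ | ⟨h1, h2⟩ <;>
      rcases ihg with ⟨h3, h4⟩ | ⟨h3, h4⟩ | ⟨h3, h4⟩ <;>
      simp only [GRel, h1, h2, h3, h4] <;> norm_num
  | imp f g _ _ ihf ihg =>
      rcases ihf with ⟨h1, h2⟩ | ⟨h1, h2⟩ | ⟨h1, h2⟩ <;>
      rcases ihg with ⟨h3, h4⟩ | ⟨h3, h4⟩ | ⟨h3, h4⟩ <;>
      simp only [GRel, gimp, h1, h2, h3, h4] <;> norm_num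

/-- In 3-valued Gödel logic with truth values {0, 1/2, 1}, Δ is not definable from
the Gödel connectives: no unary function of the clone agrees with Δ on {0, 1/2, 1}. -/
theorem delta_not_definable_three_valued :
    ∀ f : ℝ → ℝ, GClone1 f →
      ¬ (∀ x ∈ ({0, 1/2, 1} : Set ℝ), f x = gdelta x) := by
  intro f hf hagree
  have hrel := gclone_rel f hf
  have h2 : f (1/2) = gdelta (1/2) := hagree _ (by norm_num)
  have h3 : f 1 = gdelta 1 := hagree _ (by norm_num)
  rw [show gdelta (1/2) = 0 by norm_num [gdelta],
      show gdelta 1 = 1 by simp [gdelta]] at *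
  rcases hrel with ⟨a, b⟩ | ⟨a, b⟩ | ⟨a, b⟩
  · rw [h3] at b; norm_num at b
  · rw [h2] at a; norm_num at a
  · rw [h2] at a; norm_num at a
end

section
/- In standard Gödel semantics over [0,1] with Δ, the formula (¬ΔX₁ ∧ ⋯ ∧ ¬ΔXₙ) → F is valid if and only if the formula F ∨ X₁ ∨ ⋯ ∨ Xₙ is valid. -/
/-- Propositional Gödel formulas with Δ, over variables X₁,…,Xₙ. -/
inductive GF (n : ℕ) : Type
  | var : Fin n → GF n
  | bot : GF n
  | top : GF n
  | and : GF n → GF n → GF n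
  | or : GF n → GF n → GF n
  | imp : GF n → GF n → GF n
  | delta : GF n → GF n

noncomputable def GF.eval {n : ℕ} (v : Fin n → ℝ) : GF n → ℝ
  | var i => v i
  | bot => 0
  | top => 1
  | and a b => min (a.eval v) (b.eval v)
  | or a b => max (a.eval v) (b.eval v)
  | imp a b => gimp (a.eval v) (b.eval v)
  | delta a => gdelta (a.eval v)

/-- Standard validity: value 1 under every interpretation into [0,1]. -/
def ValidStd {n : ℕ} (F : GF n) : Prop :=
  ∀ v : Fin n → ℝ, (∀ i, v i ∈ Set.Icc (0:ℝ) 1) → F.eval v = 1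

/-- The conjunction ¬ΔX₁ ∧ ⋯ ∧ ¬ΔXₙ. -/
def negDeltaHyp (n : ℕ) : GF n :=
  (List.finRange n).foldr
    (fun i acc => GF.and (GF.imp (GF.delta (GF.var i)) GF.bot) acc) GF.top

/-- The disjunction F ∨ X₁ ∨ ⋯ ∨ Xₙ. -/
def orVars {n : ℕ} (F : GF n) : GF n :=
  (List.finRange n).foldr (fun i acc => GF.or (GF.var i) acc) F

lemma GF.eval_mem {n : ℕ} (G : GF n) (v : Fin n → ℝ)
    (hv : ∀ i, v i ∈ Set.Icc (0:ℝ) 1) : G.eval v ∈ Set.Icc (0:ℝ) 1 := by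
  induction G with
  | var i => exact hv i
  | bot => simp [GF.eval]
  | top => simp [GF.eval]
  | and a b ha hb =>
    exact ⟨le_min ha.1 hb.1, min_le_of_left_le ha.2⟩
  | or a b ha hb =>
    exact ⟨le_max_of_le_left ha.1, max_le ha.2 hb.2⟩
  | imp a b ha hb =>
    simp only [GF.eval, gimp]
    split_ifs <;> simp [hb.1, hb.2]
  | delta a ha =>
    simp only [GF.eval, gdelta]
    split_ifs <;> norm_num

lemma hypFold_eval {n : ℕ} (v : Fin n → ℝ) (l : List (Fin n)) :
    ((l.foldr (fun i acc => GF.and (GF.imp (GF.delta (GF.var i)) GF.bot) acc)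
      GF.top : GF n)).eval v = if ∀ i ∈ l, v i ≠ 1 then 1 else 0 := by
  induction l with
  | nil => simp [GF.eval]
  | cons a t ih =>
    simp only [List.foldr_cons, GF.eval, ih, gimp, gdelta]
    by_cases ha : v a = 1
    · by_cases ht : ∀ i ∈ t, v i ≠ 1 <;> simp [ha, ht] <;> split_ifs <;> norm_num <;> linarith
    · by_cases ht : ∀ i ∈ t, v i ≠ 1 <;> simp [ha, ht] <;> split_ifs <;> norm_num <;> linarith

lemma orFold_eval_eq_one {n : ℕ} (v : Fin n → ℝ)
    (hv : ∀ i, v i ∈ Set.Icc (0:ℝ) 1) (l : List (Fin n)) (F : GF n) :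
    (l.foldr (fun i acc => GF.or (GF.var i) acc) F).eval v = 1 ↔
      F.eval v = 1 ∨ ∃ i ∈ l, v i = 1 := by
  induction l with
  | nil => simp
  | cons a t ih =>
    simp only [List.foldr_cons, GF.eval]
    have hle : (t.foldr (fun i acc => GF.or (GF.var i) acc) F).eval v ≤ 1 :=
      (GF.eval_mem _ v hv).2
    constructor
    · intro h
      rcases max_choice (v a) ((t.foldr (fun i acc => GF.or (GF.var i) acc) F).eval v)
        with hm | hm
      · exact Or.inr ⟨a, by simp, hm ▸ h⟩
      · rcases (ih.mp (hm ▸ h)) with h1 | ⟨i, hi, hi1⟩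
        · exact Or.inl h1
        · exact Or.inr ⟨i, by simp [hi], hi1⟩
    · intro h
      rcases h with h1 | ⟨i, hi, hi1⟩
      · have := ih.mpr (Or.inl h1)
        exact le_antisymm (max_le (hv a).2 hle) (this ▸ le_max_right _ _)
      · rcases List.mem_cons.mp hi with rfl | hi
        · exact le_antisymm (max_le (hv i).2 hle) (hi1 ▸ le_max_left _ _)
        · have := ih.mpr (Or.inr ⟨i, hi, hi1⟩)
          exact le_antisymm (max_le (hv a).2 hle) (this ▸ le_max_right _ _)

theorem negDeltaHyp_imp_valid_iff_or_vars_valid {n : ℕ} (F : GF n) :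
    ValidStd (GF.imp (negDeltaHyp n) F) ↔ ValidStd (orVars F) := by
  constructor
  · intro h v hv
    rw [orVars, orFold_eval_eq_one v hv]
    by_cases hall : ∀ i ∈ List.finRange n, v i ≠ 1
    · left
      have h1 := h v hv
      simp only [GF.eval, negDeltaHyp, hypFold_eval, hall, if_true, gimp] at h1
      have hF := (GF.eval_mem F v hv).2
      split_ifs at h1 with hle
      · linarith
      · linarith [(GF.eval_mem F v hv).1]
    · right
      push_neg at hall
      obtain ⟨i, hi, hi1⟩ := hall
      exact ⟨i, hi, hi1⟩
  · intro h v hv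
    simp only [GF.eval, negDeltaHyp, hypFold_eval, gimp]
    by_cases hall : ∀ i ∈ List.finRange n, v i ≠ 1
    · have := (orFold_eval_eq_one v hv (List.finRange n) F).mp (h v hv)
      rcases this with h1 | ⟨i, hi, hi1⟩
      · simp [hall, h1]
      · exact absurd hi1 (hall i hi)
    · simp only [hall, if_false]
      rw [if_pos (GF.eval_mem F v hv).1]
end

section
/- Every valuation v : {X₁,…,Xₙ} → [0,1] satisfies exactly the chain formula determined by its induced total preorder, and consequently the disjunction over all chain formulas on X₁,…,Xₙ is valid in Gödel logic over [0,1]; moreover, if v maps every variable into [0,1), the disjunction of all restricted chains (chains with no variable in the equivalence class of ⊤) already has value 1. -/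
/-- Value of the relational formula A ▷ B: strict (A < B, i.e. (B→A)→B) if the
Boolean is `true`, and A ↔ B (i.e. (A→B)∧(B→A)) if it is `false`. -/
noncomputable def relVal (strict : Bool) (a b : ℝ) : ℝ :=
  if strict then gimp (gimp b a) b else min (gimp a b) (gimp b a)

/-- The sequence ⊥, X_{π(1)}, …, X_{π(n)}, ⊤ of terms of a chain, evaluated under v. -/
noncomputable def chainTerm {n : ℕ} (v : Fin n → ℝ) (π : Equiv.Perm (Fin n))
    (j : Fin (n + 2)) : ℝ :=
  if h : (j : ℕ) = 0 then 0
  else if h' : (j : ℕ) = n + 1 then 1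
  else v (π ⟨(j : ℕ) - 1, by omega⟩)

/-- The value of the chain ⊥ ▷₁ X_{π(1)} ▷₂ ⋯ ▷ₙ X_{π(n)} ▷_{n+1} ⊤ determined by a
permutation π and relations r (true = strict <, false = ↔), as the conjunction
(minimum) of the values of the successive relational formulas. -/
noncomputable def chainVal {n : ℕ} (v : Fin n → ℝ) (π : Equiv.Perm (Fin n))
    (r : Fin (n + 1) → Bool) : ℝ :=
  (List.finRange (n + 1)).foldr
    (fun i acc => min (relVal (r i) (chainTerm v π i.castSucc) (chainTerm v π i.succ)) acc) 1

theorem Fin.exists_castSucc_lt_succ {α : Type*} [LinearOrder α] {m : ℕ} {f : Fin (m + 1) → α}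
    (h : f 0 < f (Fin.last m)) : ∃ i : Fin m, f i.castSucc < f i.succ := by
  by_contra! hf
  exact (Fin.antitone_iff_succ_le.2 hf (Fin.zero_le _)).not_gt h

theorem relVal_decide_lt_eq_one {a b : ℝ} (hab : a ≤ b) : relVal (decide (a < b)) a b = 1 := by
  rcases hab.lt_or_eq with hlt | rfl
  · simp [relVal, gimp, hlt, hab, not_le.2 hlt]
  · simp [relVal, gimp]

section Chain

variable {n : ℕ} (v : Fin n → ℝ) (π : Equiv.Perm (Fin n))

noncomputable def chainRel (i : Fin (n + 1)) : Bool :=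
  decide (chainTerm v π i.castSucc < chainTerm v π i.succ)

theorem chainTerm_zero : chainTerm v π 0 = 0 := by
  simp [chainTerm]

theorem chainTerm_last : chainTerm v π (Fin.last (n + 1)) = 1 := by
  simp [chainTerm]

variable {v π}

theorem chainVal_eq_one
    {r : Fin (n + 1) → Bool}
    (hr : ∀ i, relVal (r i) (chainTerm v π i.castSucc) (chainTerm v π i.succ) = 1) :
    chainVal v π r = 1 := by
  unfold chainVal
  induction List.finRange (n + 1) with
  | nil => rfl
  | cons i l ih => rw [List.foldr_cons, ih, hr, min_self]

theorem chainTerm_monotone (hv : ∀ i, v i ∈ Set.Icc (0 : ℝ) 1) (hπ : Monotone (v ∘ π)) :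
    Monotone (chainTerm v π) := by
  intro j k hjk
  have hjk' : (j : ℕ) ≤ k := hjk
  unfold chainTerm
  split_ifs
  all_goals first
    | exact le_rfl | exact zero_le_one | exact (hv _).1 | exact (hv _).2
    | (exfalso; omega) | exact hπ (Fin.mk_le_mk.2 (by omega))

theorem chainTerm_lt_one (hv : ∀ i, v i < 1) {j : Fin (n + 2)} (hj : j ≠ Fin.last (n + 1)) :
    chainTerm v π j < 1 := by
  have hj' : (j : ℕ) ≠ n + 1 := fun h => hj (Fin.ext h)
  unfold chainTerm
  split_ifs
  exacts [zero_lt_one, hv _]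

theorem chainVal_chainRel (hmono : Monotone (chainTerm v π)) :
    chainVal v π (chainRel v π) = 1 :=
  chainVal_eq_one fun i => relVal_decide_lt_eq_one (hmono (Fin.castSucc_le_succ i))

theorem exists_chainRel_eq_true : ∃ i, chainRel v π i = true := by
  have hbounds : chainTerm v π 0 < chainTerm v π (Fin.last (n + 1)) := by
    rw [chainTerm_zero, chainTerm_last]
    exact zero_lt_one
  obtain ⟨i, hi⟩ := Fin.exists_castSucc_lt_succ hbounds
  exact ⟨i, decide_eq_true hi⟩

theorem chainRel_last (hv : ∀ i, v i < 1) : chainRel v π (Fin.last n) = true := by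
  refine decide_eq_true ?_
  rw [Fin.succ_last, chainTerm_last]
  exact chainTerm_lt_one hv (Fin.castSucc_lt_last _).ne

end Chain

/-- Every valuation into [0,1] satisfies (with value 1) the chain determined by its
induced total preorder (the permutation sorts the values, the relations record the
strict inequalities, and ⊥ is not equivalent to ⊤); hence the disjunction of all
chains is valid.  Moreover, if every variable takes a value strictly below 1, then
some restricted chain (last relation strict) already has value 1. -/
theorem chain_normal_form_valid (n : ℕ) :
    (∀ v : Fin n → ℝ, (∀ i, v i ∈ Set.Icc (0:ℝ) 1) →
      ∃ (π : Equiv.Perm (Fin n)) (r : Fin (n + 1) → Bool),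
        (∀ i j : Fin n, i ≤ j → v (π i) ≤ v (π j)) ∧
        (∀ i : Fin (n + 1), r i = true ↔ chainTerm v π i.castSucc < chainTerm v π i.succ) ∧
        (∃ i, r i = true) ∧
        chainVal v π r = 1) ∧
    (∀ v : Fin n → ℝ, (∀ i, v i ∈ Set.Ico (0:ℝ) 1) →
      ∃ (π : Equiv.Perm (Fin n)) (r : Fin (n + 1) → Bool),
        r (Fin.last n) = true ∧
        chainVal v π r = 1) := by
  have hmono : ∀ v : Fin n → ℝ, (∀ i, v i ∈ Set.Icc (0:ℝ) 1) →
      Monotone (chainTerm v (Tuple.sort v)) :=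
    fun v hv => chainTerm_monotone hv (Tuple.monotone_sort v)
  refine ⟨fun v hv => ?_, fun v hv => ?_⟩
  · exact ⟨Tuple.sort v, chainRel v (Tuple.sort v), fun _ _ hij => Tuple.monotone_sort v hij,
      fun _ => decide_eq_true_iff, exists_chainRel_eq_true,
      chainVal_chainRel (hmono v hv)⟩
  · exact ⟨Tuple.sort v, chainRel v (Tuple.sort v), chainRel_last fun i => (hv i).2,
      chainVal_chainRel (hmono v fun i => Set.Ico_subset_Icc_self (hv i))⟩
end
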